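/- Let T be a tournament with at least 4 vertices. Then T is BK-colorable (admits a 2-coloring of its arcs so that the resulting bicolored digraph has a bikernel by monochromatic paths) if and only if T is strongly connected. -/

import Mathlib

/-!
A bikernel of a bicolored tournament is a single vertex `b`, so BK-colorability says that every
vertex reaches `b` along arcs of color `0` and is reached from `b` along arcs of color `1`; in
particular the tournament is strong.

Conversely, every strong tournament on at least four vertices has a vertex whose deletion leaves it
strong (Moon). Take a maximal strong proper subtournament `M`. Unless `M` misses a single vertex,
maximality makes every other vertex dominate `M` or be dominated by it, and strong connectivity
gives an arc `x → y` with `M → x` and `y → M`. Then `M ∪ {x, y}` is strong, hence everything, and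
deleting any `m ∈ M` leaves `M ∖ {m} → x → y → M ∖ {m}`, still strong. Deleting such vertices one
at a time, a vertex `v` is put back by giving color `0` to all arcs out of `v` and color `1` to all
arcs into `v`. The induction starts at the strong tournament on four vertices,
`v₀ → v₁ → v₂ → v₃ → v₀` with chords `v₀ → v₂` and `v₁ → v₃`, where the path `v₁ v₂ v₃ v₀` gets
color `0` and the three remaining arcs color `1`.
-/

/-- A bicolored digraph is given by two arc relations `A1` (color-1 arcs) and `A2`
(color-2 arcs). A monochromatic path of color `i` is a nonempty chain of `Ai`-arcs,
i.e. `Relation.TransGen Ai`. A set `B` is a bikernel by monochromatic paths if it is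
nonempty, independent by monochromatic paths, absorbent with color 1 and dominant
with color 2. -/
def IsBikernel {V : Type*} (A1 A2 : V → V → Prop) (B : Set V) : Prop :=
  B.Nonempty ∧
  (∀ u ∈ B, ∀ v ∈ B, u ≠ v →
    ¬ Relation.TransGen A1 u v ∧ ¬ Relation.TransGen A2 u v) ∧
  (∀ v, v ∉ B → ∃ b ∈ B, Relation.TransGen A1 v b) ∧
  (∀ v, v ∉ B → ∃ b ∈ B, Relation.TransGen A2 b v)

/-- A digraph `A` is BK-colorable if some 2-coloring of its arcs yields a bicolored
digraph with a bikernel. -/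
def BKColorable {V : Type*} (A : V → V → Prop) : Prop :=
  ∃ c : V → V → Fin 2, ∃ B, IsBikernel
    (fun u v => A u v ∧ c u v = 0) (fun u v => A u v ∧ c u v = 1) B

open Relation Finset

section

variable {V : Type*} {A : V → V → Prop}

theorem Relation.ReflTransGen.exists_crossing {r : V → V → Prop} {P : V → Prop} {a b : V}
    (h : ReflTransGen r a b) (ha : P a) (hb : ¬ P b) : ∃ u w, P u ∧ ¬ P w ∧ r u w := by
  induction h with
  | refl => exact absurd ha hb
  | @tail c d _ hcd ih =>
    by_cases hc : P c
    · exact ⟨c, d, hc, hb, hcd⟩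
    · exact ih hc

theorem subsingleton_of_independent (htot : ∀ u v, u ≠ v → A u v ∨ A v u)
    (c : V → V → Fin 2) {B : Set V}
    (hind : ∀ u ∈ B, ∀ v ∈ B, u ≠ v → ¬ TransGen (fun x y => A x y ∧ c x y = 0) u v ∧
      ¬ TransGen (fun x y => A x y ∧ c x y = 1) u v) :
    B.Subsingleton := by
  have no_arc : ∀ u ∈ B, ∀ v ∈ B, u ≠ v → ¬ A u v := fun u hu v hv huv huv' => by
    obtain ⟨h0, h1⟩ := hind u hu v hv huv
    match hc : c u v with
    | 0 => exact h0 (.single ⟨huv', hc⟩)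
    | 1 => exact h1 (.single ⟨huv', hc⟩)
  intro u hu v hv
  by_contra huv
  rcases htot u v huv with h | h
  · exact no_arc u hu v hv huv h
  · exact no_arc v hv u hu (Ne.symm huv) h

theorem BKColorable.reflTransGen (htot : ∀ u v, u ≠ v → A u v ∨ A v u) (h : BKColorable A)
    (u v : V) : ReflTransGen A u v := by
  obtain ⟨c, B, ⟨b, hb⟩, hind, habs, hdom⟩ := h
  have hB : ∀ w ∈ B, w = b := fun w hw => subsingleton_of_independent htot c hind hw hb
  have to_b : ReflTransGen A u b := by
    by_cases hu : u ∈ B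
    · rw [hB u hu]
    · obtain ⟨b', hb', hub'⟩ := habs u hu
      rw [← hB b' hb']
      exact (TransGen.mono (fun _ _ h => h.1) _ _ hub').to_reflTransGen
  have from_b : ReflTransGen A b v := by
    by_cases hv : v ∈ B
    · rw [hB v hv]
    · obtain ⟨b', hb', hb'v⟩ := hdom v hv
      rw [← hB b' hb']
      exact (TransGen.mono (fun _ _ h => h.1) _ _ hb'v).to_reflTransGen
  exact to_b.trans from_b

structure IsTournament (A : V → V → Prop) : Prop where
  xor : ∀ u v, u ≠ v → Xor (A u v) (A v u)
  irrefl : ∀ v, ¬ A v v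

namespace IsTournament

variable {u v : V}

theorem ne_of_arc (hA : IsTournament A) (h : A u v) : u ≠ v :=
  fun huv => hA.irrefl v (huv ▸ h)

theorem asymm (hA : IsTournament A) (h : A u v) : ¬ A v u :=
  (hA.xor u v (hA.ne_of_arc h)).elim (fun h' => h'.2) (fun h' => absurd h h'.2)

theorem arc_or (hA : IsTournament A) (huv : u ≠ v) : A u v ∨ A v u :=
  Xor.or (hA.xor u v huv)

theorem arc_of_not (hA : IsTournament A) (huv : u ≠ v) (h : ¬ A u v) : A v u :=
  (hA.arc_or huv).resolve_left h

theorem exists_triangle (hA : IsTournament A) {r : V → V → Prop} (hr : r ≤ A) {a s : V}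
    (has : A a s) (hsa : ReflTransGen r s a) : ∃ x y, A a x ∧ r x y ∧ A y a := by
  induction hsa using ReflTransGen.head_induction_on with
  | refl => exact absurd has (hA.irrefl a)
  | @head s d hsd _ ih =>
    by_cases hda : A d a
    · exact ⟨s, d, has, hsd, hda⟩
    · exact ih (hA.arc_of_not (fun hd => hA.asymm has (hd ▸ hr s d hsd)) hda)

end IsTournament

def induce (A : V → V → Prop) (S : Finset V) (u w : V) : Prop :=
  A u w ∧ u ∈ S ∧ w ∈ S

theorem induce_mono {S T : Finset V} (hST : S ⊆ T) : induce A S ≤ induce A T :=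
  fun _ _ ⟨h, hu, hw⟩ => ⟨h, hST hu, hST hw⟩

def StrongOn (A : V → V → Prop) (S : Finset V) : Prop :=
  ∀ a ∈ S, ∀ b ∈ S, ReflTransGen (induce A S) a b

theorem strongOn_univ [Fintype V] (h : ∀ u v, ReflTransGen A u v) : StrongOn A univ :=
  fun a _ b _ => ReflTransGen.mono (fun _ _ huw => ⟨huw, mem_univ _, mem_univ _⟩) _ _ (h a b)

theorem strongOn_singleton (a : V) : StrongOn A {a} := by
  intro u hu w hw
  rw [mem_singleton.1 hu, mem_singleton.1 hw]

theorem strongOn_of_hub {S : Finset V} (v : V)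
    (hub : ∀ t ∈ S, ReflTransGen (induce A S) t v ∧ ReflTransGen (induce A S) v t) :
    StrongOn A S :=
  fun a ha b hb => (hub a ha).1.trans (hub b hb).2

namespace StrongOn

variable {S : Finset V} {v w : V}

theorem exists_arc_out (hS : StrongOn A S) (hv : v ∈ S) (hw : w ∈ S) (hvw : v ≠ w) :
    ∃ q ∈ S, A v q := by
  rcases (hS v hv w hw).cases_head with h | ⟨q, ⟨hvq, -, hq⟩, -⟩
  · exact absurd h hvw
  · exact ⟨q, hq, hvq⟩

theorem exists_arc_in (hS : StrongOn A S) (hv : v ∈ S) (hw : w ∈ S) (hvw : v ≠ w) :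
    ∃ p ∈ S, A p v := by
  rcases (hS w hw v hv).cases_tail with h | ⟨p, -, hpv, hp, -⟩
  · exact absurd h hvw
  · exact ⟨p, hp, hpv⟩

theorem insert_of_arcs [DecidableEq V] {M : Finset V} {p q z : V} (hM : StrongOn A M) (hp : p ∈ M)
    (hq : q ∈ M) (hpz : A p z) (hzq : A z q) : StrongOn A (insert z M) := by
  have lift : ∀ {a b}, a ∈ M → b ∈ M → ReflTransGen (induce A (insert z M)) a b :=
    fun ha hb => ReflTransGen.mono (induce_mono (subset_insert z M)) _ _ (hM _ ha _ hb)
  refine strongOn_of_hub p fun t ht => ?_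
  rcases mem_insert.1 ht with rfl | ht
  · exact ⟨.head ⟨hzq, ht, mem_insert_of_mem hq⟩ (lift hq hp),
      .single ⟨hpz, mem_insert_of_mem hp, ht⟩⟩
  · exact ⟨lift ht hp, lift hp ht⟩

end StrongOn

theorem strongOn_insert_insert [DecidableEq V] {M : Finset V} {x y : V} (hM : M.Nonempty)
    (hx : ∀ m ∈ M, A m x) (hxy : A x y) (hy : ∀ m ∈ M, A y m) :
    StrongOn A (insert x (insert y M)) := by
  obtain ⟨m, hm⟩ := hM
  have hxT : x ∈ insert x (insert y M) := mem_insert_self x _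
  have hyT : y ∈ insert x (insert y M) := mem_insert_of_mem (mem_insert_self y M)
  have hMT : ∀ {t}, t ∈ M → t ∈ insert x (insert y M) :=
    fun ht => mem_insert_of_mem (mem_insert_of_mem ht)
  have x_to_y : ReflTransGen (induce A (insert x (insert y M))) x y := .single ⟨hxy, hxT, hyT⟩
  refine strongOn_of_hub x fun t ht => ?_
  rcases mem_insert.1 ht with rfl | ht
  · exact ⟨.refl, .refl⟩
  rcases mem_insert.1 ht with rfl | ht
  · exact ⟨.head ⟨hy m hm, hyT, hMT hm⟩ (.single ⟨hx m hm, hMT hm, hxT⟩), x_to_y⟩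
  · exact ⟨.single ⟨hx t ht, hMT ht, hxT⟩, x_to_y.tail ⟨hy t ht, hyT, hMT ht⟩⟩

namespace IsTournament

theorem exists_arc_of_homogeneous (hA : IsTournament A) {S M : Finset V} (hS : StrongOn A S)
    (hMS : M ⊆ S) {m z : V} (hm : m ∈ M) (hz : z ∈ S) (hzM : z ∉ M)
    (hhom : ∀ u ∈ S, u ∉ M → (∀ m ∈ M, A m u) ∨ ∀ m ∈ M, A u m) :
    ∃ x ∈ S, ∃ y ∈ S, (∀ m ∈ M, A m x) ∧ A x y ∧ ∀ m ∈ M, A y m := by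
  obtain ⟨y₁, w, hy₁M, hwM, hy₁w, hy₁S, -⟩ :=
    (hS z hz m (hMS hm)).exists_crossing (P := (· ∉ M)) hzM (not_not.2 hm)
  obtain ⟨w', x₁, hw'M, hx₁M, hw'x₁, -, hx₁S⟩ :=
    (hS m (hMS hm) z hz).exists_crossing (P := (· ∈ M)) hm hzM
  have hy₁ : ∀ m ∈ M, A y₁ m :=
    (hhom y₁ hy₁S hy₁M).resolve_left fun h => hA.asymm hy₁w (h w (not_not.1 hwM))
  have hx₁ : ∀ m ∈ M, A m x₁ :=
    (hhom x₁ hx₁S hx₁M).resolve_right fun h => hA.asymm hw'x₁ (h w' hw'M)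
  obtain ⟨x, y, hx, hy, hxy, hxS, hyS⟩ :=
    (hS x₁ hx₁S y₁ hy₁S).exists_crossing (P := fun u => ∀ m ∈ M, A m u) hx₁
      fun h => hA.asymm (hy₁ m hm) (h m hm)
  have hyM : y ∉ M := fun hyM => hA.asymm hxy (hx y hyM)
  exact ⟨x, hxS, y, hyS, hx, hxy, (hhom y hyS hyM).resolve_left hy⟩

theorem exists_strongOn_erase [DecidableEq V] (hA : IsTournament A) {S : Finset V}
    (hS : StrongOn A S) (hcard : 4 ≤ #S) : ∃ v ∈ S, StrongOn A (S.erase v) := by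
  classical
  obtain ⟨s, hs⟩ : S.Nonempty := card_pos.1 (by omega)
  have hsS : {s} ⊂ S := (singleton_subset_iff.2 hs).ssubset_of_ne
    fun h => by rw [← h, card_singleton] at hcard; omega
  obtain ⟨M, hM, hmax⟩ := (S.ssubsets.filter fun T => T.Nonempty ∧ StrongOn A T).exists_max_image
    card ⟨{s}, mem_filter.2 ⟨mem_ssubsets.2 hsS, singleton_nonempty s, strongOn_singleton s⟩⟩
  simp only [mem_filter, mem_ssubsets, and_imp] at hM hmax
  obtain ⟨hMS, ⟨m, hm⟩, hMstrong⟩ := hM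
  by_cases hfull : ∃ z ∈ S, z ∉ M ∧ insert z M = S
  · obtain ⟨z, hz, hzM, rfl⟩ := hfull
    exact ⟨z, hz, by rwa [erase_insert hzM]⟩
  push Not at hfull
  have grow : ∀ T, M ⊂ T → T ⊆ S → StrongOn A T → T = S := fun T hMT hTS hT => by
    by_contra hne
    exact (hmax T (hTS.ssubset_of_ne hne) ⟨m, hMT.subset hm⟩ hT).not_gt (card_lt_card hMT)
  have hhom : ∀ z ∈ S, z ∉ M → (∀ m ∈ M, A m z) ∨ ∀ m ∈ M, A z m := by
    intro z hz hzM
    by_contra! h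
    obtain ⟨⟨q, hq, hqz⟩, p, hp, hzp⟩ := h
    have hne : ∀ {t}, t ∈ M → t ≠ z := fun ht h => hzM (h ▸ ht)
    exact hfull z hz hzM (grow _ (ssubset_insert hzM) (insert_subset hz hMS.subset)
      (hMstrong.insert_of_arcs hp hq (hA.arc_of_not (hne hp).symm hzp)
        (hA.arc_of_not (hne hq) hqz)))
  obtain ⟨z, hz, hzM⟩ := exists_of_ssubset hMS
  obtain ⟨x, hxS, y, hyS, hx, hxy, hy⟩ :=
    hA.exists_arc_of_homogeneous hS hMS.subset hm hz hzM hhom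
  have hxM : x ∉ M := fun h => hA.irrefl x (hx x h)
  have hyM : y ∉ M := fun h => hA.irrefl y (hy y h)
  have hxyM : x ∉ insert y M := by simp [hA.ne_of_arc hxy, hxM]
  have hS_eq : insert x (insert y M) = S :=
    grow _ ((ssubset_insert hyM).trans (ssubset_insert hxyM))
      (insert_subset hxS (insert_subset hyS hMS.subset)) (strongOn_insert_insert ⟨m, hm⟩ hx hxy hy)
  have hM2 : 1 < #M := by
    rw [← hS_eq, card_insert_of_notMem hxyM, card_insert_of_notMem hyM] at hcard
    omega
  obtain ⟨m', hm', hm'm⟩ := exists_mem_ne hM2 m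
  refine ⟨m, hMS.subset hm, ?_⟩
  rw [← hS_eq, erase_insert_of_ne (ne_of_mem_of_not_mem hm hxM).symm,
    erase_insert_of_ne (ne_of_mem_of_not_mem hm hyM).symm]
  exact strongOn_insert_insert ⟨m', mem_erase.2 ⟨hm'm, hm'⟩⟩
    (fun t ht => hx t (mem_of_mem_erase ht)) hxy (fun t ht => hy t (mem_of_mem_erase ht))

end IsTournament

/-- The coloring `c` of the arcs inside `S` makes `{b}` a bikernel of `S`. -/
def IsBKRoot (A : V → V → Prop) (S : Finset V) (c : V → V → Fin 2) (b : V) : Prop :=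
  ∀ v ∈ S, ReflTransGen (fun x y => induce A S x y ∧ c x y = 0) v b ∧
    ReflTransGen (fun x y => induce A S x y ∧ c x y = 1) b v

theorem IsBKRoot.bkColorable [Fintype V] {c : V → V → Fin 2} {b : V}
    (h : IsBKRoot A univ c b) : BKColorable A := by
  refine ⟨c, {b}, Set.singleton_nonempty b, ?_, fun v hv => ⟨b, rfl, ?_⟩, fun v hv => ⟨b, rfl, ?_⟩⟩
  · rintro u rfl v rfl huv
    exact absurd rfl huv
  · exact TransGen.mono (fun _ _ h => ⟨h.1.1, h.2⟩) _ _
      ((reflTransGen_iff_eq_or_transGen.1 (h v (mem_univ v)).1).resolve_left (Ne.symm hv))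
  · exact TransGen.mono (fun _ _ h => ⟨h.1.1, h.2⟩) _ _
      ((reflTransGen_iff_eq_or_transGen.1 (h v (mem_univ v)).2).resolve_left hv)

theorem IsBKRoot.insert_of_arcs [DecidableEq V] {S : Finset V} {c : V → V → Fin 2} {b p q v : V}
    (h : IsBKRoot A S c b) (hv : v ∉ S) (hp : p ∈ S) (hq : q ∈ S) (hpv : A p v) (hvq : A v q) :
    IsBKRoot A (insert v S) (fun x y => if x = v then 0 else if y = v then 1 else c x y) b := by
  have lift : ∀ (i : Fin 2) {x y}, ReflTransGen (fun x y => induce A S x y ∧ c x y = i) x y →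
      ReflTransGen (fun x y => induce A (insert v S) x y ∧
        (if x = v then 0 else if y = v then 1 else c x y) = i) x y :=
    fun i _ _ => ReflTransGen.mono (fun x y ⟨⟨hxy, hx, hy⟩, hc⟩ =>
      ⟨⟨hxy, mem_insert_of_mem hx, mem_insert_of_mem hy⟩, by
        rw [if_neg (ne_of_mem_of_not_mem hx hv), if_neg (ne_of_mem_of_not_mem hy hv), hc]⟩) _ _
  intro u hu
  rcases mem_insert.1 hu with rfl | hu
  · exact ⟨.head ⟨⟨hvq, mem_insert_self u S, mem_insert_of_mem hq⟩, if_pos rfl⟩ (lift 0 (h q hq).1),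
      .tail (lift 1 (h p hp).2) ⟨⟨hpv, mem_insert_of_mem hp, mem_insert_self u S⟩,
        by simp only [if_neg (ne_of_mem_of_not_mem hp hv), if_pos]⟩⟩
  · exact ⟨lift 0 (h u hu).1, lift 1 (h u hu).2⟩

namespace IsTournament

theorem exists_isBKRoot_of_four_cycle [DecidableEq V] (hA : IsTournament A) {v₀ v₁ v₂ v₃ : V}
    (h₀₁ : A v₀ v₁) (h₁₂ : A v₁ v₂) (h₂₃ : A v₂ v₃) (h₃₀ : A v₃ v₀) (h₀₂ : A v₀ v₂)
    (h₁₃ : A v₁ v₃) : ∃ c b, IsBKRoot A {v₀, v₁, v₂, v₃} c b := by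
  set S : Finset V := {v₀, v₁, v₂, v₃}
  set c : V → V → Fin 2 := fun x y => if x = v₀ ∨ x = v₁ ∧ y = v₃ then 1 else 0
  have step : ∀ {x y : V} (i : Fin 2), A x y → x ∈ S → y ∈ S → c x y = i →
      ReflTransGen (fun x y => induce A S x y ∧ c x y = i) x y :=
    fun i hxy hx hy hc => .single ⟨⟨hxy, hx, hy⟩, hc⟩
  have h₁₀ := (hA.ne_of_arc h₀₁).symm
  have h₂₀ := (hA.ne_of_arc h₀₂).symm
  have h₃₁ := (hA.ne_of_arc h₁₃).symm
  have to_v₀ : ReflTransGen (fun x y => induce A S x y ∧ c x y = 0) v₃ v₀ :=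
    step 0 h₃₀ (by simp [S]) (by simp [S]) (by simp [c, hA.ne_of_arc h₃₀, h₃₁])
  have to_v₃ : ReflTransGen (fun x y => induce A S x y ∧ c x y = 0) v₂ v₃ :=
    step 0 h₂₃ (by simp [S]) (by simp [S]) (by simp [c, h₂₀, hA.ne_of_arc h₁₂ |>.symm])
  have to_v₂ : ReflTransGen (fun x y => induce A S x y ∧ c x y = 0) v₁ v₂ :=
    step 0 h₁₂ (by simp [S]) (by simp [S]) (by simp [c, h₁₀, hA.ne_of_arc h₂₃])
  have v₀_to_v₁ : ReflTransGen (fun x y => induce A S x y ∧ c x y = 1) v₀ v₁ :=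
    step 1 h₀₁ (by simp [S]) (by simp [S]) (by simp [c])
  refine ⟨c, v₀, fun v hv => ?_⟩
  simp only [S, mem_insert, mem_singleton] at hv
  rcases hv with rfl | rfl | rfl | rfl
  · exact ⟨.refl, .refl⟩
  · exact ⟨to_v₂.trans (to_v₃.trans to_v₀), v₀_to_v₁⟩
  · exact ⟨to_v₃.trans to_v₀, step 1 h₀₂ (by simp [S]) (by simp [S]) (by simp [c])⟩
  · exact ⟨to_v₀, v₀_to_v₁.tail ⟨⟨h₁₃, by simp [S], by simp [S]⟩, by simp [c]⟩⟩

theorem exists_isBKRoot_of_triangle [DecidableEq V] (hA : IsTournament A) {x y w z : V}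
    (hS : StrongOn A {x, y, w, z}) (hxy : A x y) (hyw : A y w) (hwx : A w x) (hzx : A z x)
    (hzw : z ≠ w) : ∃ c b, IsBKRoot A {x, y, w, z} c b := by
  have hzy : z ≠ y := fun h => hA.asymm hxy (h ▸ hzx)
  rcases hA.arc_or hzy with hzy | hyz
  · obtain ⟨p, hp, hpz⟩ := hS.exists_arc_in (w := x) (by simp) (by simp) (hA.ne_of_arc hzx)
    have hwz : A w z := by
      simp only [mem_insert, mem_singleton] at hp
      rcases hp with rfl | rfl | rfl | rfl
      · exact absurd hzx (hA.asymm hpz)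
      · exact absurd hzy (hA.asymm hpz)
      · exact hpz
      · exact absurd hpz (hA.irrefl p)
    rw [show ({x, y, w, z} : Finset V) = {w, z, x, y} by ext; simp; tauto]
    exact hA.exists_isBKRoot_of_four_cycle hwz hzx hxy hyw hwx hzy
  · rcases hA.arc_or hzw with hzw | hwz
    · rw [show ({x, y, w, z} : Finset V) = {y, z, w, x} by ext; simp; tauto]
      exact hA.exists_isBKRoot_of_four_cycle hyz hzw hwx hxy hyw hzx
    · rw [show ({x, y, w, z} : Finset V) = {y, w, z, x} by ext; simp; tauto]
      exact hA.exists_isBKRoot_of_four_cycle hyw hwz hzx hxy hyz hwx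

theorem exists_isBKRoot_of_card_eq_four [DecidableEq V] (hA : IsTournament A) {S : Finset V}
    (hS : StrongOn A S) (hcard : #S = 4) : ∃ c b, IsBKRoot A S c b := by
  obtain ⟨a, ha⟩ : S.Nonempty := card_pos.1 (by omega)
  obtain ⟨a', ha', ha'a⟩ := exists_mem_ne (s := S) (by omega) a
  obtain ⟨s, hs, has⟩ := hS.exists_arc_out ha ha' ha'a.symm
  obtain ⟨x, y, hax, ⟨hxy, hxS, hyS⟩, hya⟩ :=
    hA.exists_triangle (fun _ _ h => h.1) has (hS s hs a ha)
  obtain ⟨z, hz, hzT⟩ := exists_mem_notMem_of_card_lt_card (s := {a, x, y}) (t := S)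
    (card_le_three.trans_lt (by omega))
  simp only [mem_insert, mem_singleton, not_or] at hzT
  obtain ⟨hza, hzx, hzy⟩ := hzT
  have hS_eq : S = {a, x, y, z} := by
    have hxa := (hA.ne_of_arc hax).symm
    have hyx := (hA.ne_of_arc hxy).symm
    refine (eq_of_subset_of_card_le (by simp [insert_subset_iff, ha, hxS, hyS, hz]) ?_).symm
    rw [hcard, card_insert_of_notMem (by simp [hxa.symm, (hA.ne_of_arc hya).symm, Ne.symm hza]),
      card_insert_of_notMem (by simp [hyx.symm, Ne.symm hzx]), card_pair (Ne.symm hzy)]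
  subst hS_eq
  obtain ⟨q, hq, hzq⟩ := hS.exists_arc_out (w := a) (by simp) (by simp) hza
  simp only [mem_insert, mem_singleton] at hq
  rcases hq with rfl | rfl | rfl | rfl
  · exact hA.exists_isBKRoot_of_triangle hS hax hxy hya hzq hzy
  · rw [show ({a, q, y, z} : Finset V) = {q, y, a, z} by ext; simp; tauto] at hS ⊢
    exact hA.exists_isBKRoot_of_triangle hS hxy hya hax hzq hza
  · rw [show ({a, x, q, z} : Finset V) = {q, a, x, z} by ext; simp; tauto] at hS ⊢
    exact hA.exists_isBKRoot_of_triangle hS hya hax hxy hzq hzx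
  · exact absurd hzq (hA.irrefl q)

end IsTournament

theorem IsTournament.exists_isBKRoot [DecidableEq V] (hA : IsTournament A) {S : Finset V}
    (hS : StrongOn A S) (hcard : 4 ≤ #S) : ∃ c b, IsBKRoot A S c b := by
  induction S using Finset.strongInduction with
  | H S ih =>
    rcases hcard.eq_or_lt with h4 | h5
    · exact hA.exists_isBKRoot_of_card_eq_four hS h4.symm
    obtain ⟨v, hv, hSv⟩ := hA.exists_strongOn_erase hS hcard
    obtain ⟨c, b, hb⟩ := ih _ (erase_ssubset hv) hSv (by rw [card_erase_of_mem hv]; omega)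
    obtain ⟨w, hw, hwv⟩ := exists_mem_ne (s := S) (by omega) v
    obtain ⟨p, hp, hpv⟩ := hS.exists_arc_in hv hw hwv.symm
    obtain ⟨q, hq, hvq⟩ := hS.exists_arc_out hv hw hwv.symm
    rw [← insert_erase hv]
    exact ⟨_, b, hb.insert_of_arcs (notMem_erase v S) (mem_erase.2 ⟨hA.ne_of_arc hpv, hp⟩)
      (mem_erase.2 ⟨(hA.ne_of_arc hvq).symm, hq⟩) hpv hvq⟩

end

/-- A tournament with at least 4 vertices is BK-colorable iff it is strongly
connected. -/
theorem tournament_bk_colorable_iff {V : Type*} [Fintype V] (A : V → V → Prop)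
    (htour : ∀ u v : V, u ≠ v → Xor' (A u v) (A v u)) (hirr : ∀ v, ¬ A v v)
    (hcard : 4 ≤ Fintype.card V) :
    BKColorable A ↔ ∀ u v : V, Relation.ReflTransGen A u v := by
  classical
  refine ⟨fun h => h.reflTransGen fun u v huv => Xor.or (htour u v huv), fun hstrong => ?_⟩
  obtain ⟨c, b, hb⟩ :=
    IsTournament.exists_isBKRoot ⟨htour, hirr⟩ (strongOn_univ hstrong) (by rwa [card_univ])
  exact hb.bkColorable
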